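/- arXiv:1801.04410 — 10 statements merged into one kernel-verified Lean document; each statement's English description precedes it below -/
import Mathlib

section
/- Let (𝒜', 𝒜, 𝒜'', i^*, i_*, i^!, j_!, j^*, j_*) be a recollement of abelian categories and let 𝒞 be a wide subcategory of 𝒜 such that i_*(A') ∈ 𝒞 for every object A' of 𝒜'. Then for every object C ∈ 𝒞 one has j_*(j^*(C)) ∈ 𝒞 and j_!(j^*(C)) ∈ 𝒞. -/
open CategoryTheory CategoryTheory.Limits

universe v₁ v₂ v₃ u₁ u₂ u₃

/-- A recollement of abelian categories `(A₁, A₂, A₃)` (playing the roles of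
`(𝒜', 𝒜, 𝒜'')`), together with the standard consequences of the definition
(exactness of `i_*` and `j^*`, the canonical natural isomorphisms, and the
two canonical four-term exact sequences). -/
structure Recollement (A₁ : Type u₁) (A₂ : Type u₂) (A₃ : Type u₃)
    [Category.{v₁} A₁] [Category.{v₂} A₂] [Category.{v₃} A₃]
    [Abelian A₁] [Abelian A₂] [Abelian A₃] where
  /-- `i^* : 𝒜 ⥤ 𝒜'` -/
  iStar : A₂ ⥤ A₁
  /-- `i_* : 𝒜' ⥤ 𝒜` -/
  iLow  : A₁ ⥤ A₂
  /-- `i^! : 𝒜 ⥤ 𝒜'` -/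
  iShk  : A₂ ⥤ A₁
  /-- `j_! : 𝒜'' ⥤ 𝒜` -/
  jLow  : A₃ ⥤ A₂
  /-- `j^* : 𝒜 ⥤ 𝒜''` -/
  jStar : A₂ ⥤ A₃
  /-- `j_* : 𝒜'' ⥤ 𝒜` -/
  jUp   : A₃ ⥤ A₂
  iStar_additive : iStar.Additive
  iLow_additive : iLow.Additive
  iShk_additive : iShk.Additive
  jLow_additive : jLow.Additive
  jStar_additive : jStar.Additive
  jUp_additive : jUp.Additive
  /-- the adjoint pair `(i^*, i_*)` -/
  adj₁ : iStar ⊣ iLow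
  /-- the adjoint pair `(i_*, i^!)` -/
  adj₂ : iLow ⊣ iShk
  /-- the adjoint pair `(j_!, j^*)` -/
  adj₃ : jLow ⊣ jStar
  /-- the adjoint pair `(j^*, j_*)` -/
  adj₄ : jStar ⊣ jUp
  iLow_full : iLow.Full
  iLow_faithful : iLow.Faithful
  jLow_full : jLow.Full
  jLow_faithful : jLow.Faithful
  jUp_full : jUp.Full
  jUp_faithful : jUp.Faithful
  /-- `j^*(A) ≅ 0` iff `A` is in the essential image of `i_*`. -/
  ker_jStar : ∀ X : A₂, IsZero (jStar.obj X) ↔ ∃ Y : A₁, Nonempty (iLow.obj Y ≅ X)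
  /-- `i^* i_* ≅ id` -/
  iso₁ : iLow ⋙ iStar ≅ 𝟭 A₁
  /-- `i^! i_* ≅ id` -/
  iso₂ : iLow ⋙ iShk ≅ 𝟭 A₁
  /-- `j^* j_! ≅ id` -/
  iso₃ : jLow ⋙ jStar ≅ 𝟭 A₃
  /-- `j^* j_* ≅ id` -/
  iso₄ : jUp ⋙ jStar ≅ 𝟭 A₃
  iLow_preservesFiniteLimits : PreservesFiniteLimits iLow
  iLow_preservesFiniteColimits : PreservesFiniteColimits iLow
  jStar_preservesFiniteLimits : PreservesFiniteLimits jStar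
  jStar_preservesFiniteColimits : PreservesFiniteColimits jStar
  /-- the exact sequence `0 → i_*(M') → j_! j^*(A) → A → i_* i^*(A) → 0` -/
  seq₁ : ∀ X : A₂, ∃ (M : A₁) (α : iLow.obj M ⟶ jLow.obj (jStar.obj X))
      (w₁ : α ≫ adj₃.counit.app X = 0)
      (w₂ : adj₃.counit.app X ≫ adj₁.unit.app X = 0),
      Mono α ∧ Epi (adj₁.unit.app X) ∧
      (ShortComplex.mk α (adj₃.counit.app X) w₁).Exact ∧
      (ShortComplex.mk (adj₃.counit.app X) (adj₁.unit.app X) w₂).Exact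
  /-- the exact sequence `0 → i_* i^!(A) → A → j_* j^*(A) → i_*(N') → 0` -/
  seq₂ : ∀ X : A₂, ∃ (N : A₁) (γ : jUp.obj (jStar.obj X) ⟶ iLow.obj N)
      (w₁ : adj₂.counit.app X ≫ adj₄.unit.app X = 0)
      (w₂ : adj₄.unit.app X ≫ γ = 0),
      Mono (adj₂.counit.app X) ∧ Epi γ ∧
      (ShortComplex.mk (adj₂.counit.app X) (adj₄.unit.app X) w₁).Exact ∧
      (ShortComplex.mk (adj₄.unit.app X) γ w₂).Exact

/-- A wide subcategory of an abelian category, given as an isomorphism-closed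
set of objects that is closed under kernels, cokernels and extensions. -/
structure IsWide {A : Type u₁} [Category.{v₁} A] [Abelian A] (P : Set A) : Prop where
  mem_of_iso : ∀ {X Y : A}, (X ≅ Y) → X ∈ P → Y ∈ P
  kernel_mem : ∀ {X Y : A} (f : X ⟶ Y), X ∈ P → Y ∈ P → (kernel f) ∈ P
  cokernel_mem : ∀ {X Y : A} (f : X ⟶ Y), X ∈ P → Y ∈ P → (cokernel f) ∈ P
  extension_mem : ∀ {X Y Z : A} (f : X ⟶ Y) (g : Y ⟶ Z) (w : f ≫ g = 0),
      (ShortComplex.mk f g w).ShortExact → X ∈ P → Z ∈ P → Y ∈ P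

/-- The essential image of a set of objects under a functor. -/
def imageSet {A : Type u₁} {B : Type u₂} [Category.{v₁} A] [Category.{v₂} B]
    (F : A ⥤ B) (P : Set A) : Set B :=
  {Y | ∃ X ∈ P, Nonempty (F.obj X ≅ Y)}

/-- For a recollement and a wide subcategory `𝒞 ⊆ 𝒜` containing `i_*(𝒜')`,
one has `j_* j^*(C) ∈ 𝒞` and `j_! j^*(C) ∈ 𝒞` for every `C ∈ 𝒞`. -/
theorem stmt0 {A₁ : Type u₁} {A₂ : Type u₂} {A₃ : Type u₃}
    [Category.{v₁} A₁] [Category.{v₂} A₂] [Category.{v₃} A₃]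
    [Abelian A₁] [Abelian A₂] [Abelian A₃]
    (R : Recollement A₁ A₂ A₃)
    (P : Set A₂) (hP : IsWide P) (hi : ∀ X : A₁, R.iLow.obj X ∈ P) :
    ∀ C ∈ P, R.jUp.obj (R.jStar.obj C) ∈ P ∧ R.jLow.obj (R.jStar.obj C) ∈ P := by
  intro C hC
  constructor
  · -- j_* j^* C ∈ P
    obtain ⟨N, γ, w₁, w₂, hmono, hepi, hex₁, hex₂⟩ := R.seq₂ C
    set c := R.adj₂.counit.app C with hc
    set u := R.adj₄.unit.app C with hu
    have hd : Mono (cokernel.desc c u w₁) :=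
      ((ShortComplex.mk c u w₁).exact_iff_mono_cokernel_desc).1 hex₁
    set d := cokernel.desc c u w₁ with hdd
    have hw : d ≫ γ = 0 := by
      rw [← cancel_epi (cokernel.π c)]
      simp [hdd, w₂]
    let φ : ShortComplex.mk u γ w₂ ⟶ ShortComplex.mk d γ hw :=
      { τ₁ := cokernel.π c
        τ₂ := 𝟙 _
        τ₃ := 𝟙 _
        comm₁₂ := by simp [hdd]
        comm₂₃ := by simp }
    haveI : Epi φ.τ₁ := by dsimp [φ]; infer_instance
    haveI : IsIso φ.τ₂ := by dsimp [φ]; infer_instance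
    haveI : Mono φ.τ₃ := by dsimp [φ]; infer_instance
    have hex : (ShortComplex.mk d γ hw).Exact :=
      (ShortComplex.exact_iff_of_epi_of_isIso_of_mono φ).1 hex₂
    have hse : (ShortComplex.mk d γ hw).ShortExact :=
      { exact := hex, mono_f := hd, epi_g := hepi }
    exact hP.extension_mem d γ hw hse (hP.cokernel_mem c (hi _) hC) (hi N)
  · -- j_! j^* C ∈ P
    obtain ⟨M, α, w₁, w₂, hmono, hepi, hex₁, hex₂⟩ := R.seq₁ C
    set c := R.adj₃.counit.app C with hc
    set u := R.adj₁.unit.app C with hu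
    have he : Epi (kernel.lift u c w₂) :=
      ((ShortComplex.mk c u w₂).exact_iff_epi_kernel_lift).1 hex₂
    set e := kernel.lift u c w₂ with hee
    have hw : α ≫ e = 0 := by
      rw [← cancel_mono (kernel.ι u)]
      simp [hee, w₁]
    let φ : ShortComplex.mk α e hw ⟶ ShortComplex.mk α c w₁ :=
      { τ₁ := 𝟙 _
        τ₂ := 𝟙 _
        τ₃ := kernel.ι u
        comm₁₂ := by simp
        comm₂₃ := by simp [hee] }
    haveI : Epi φ.τ₁ := by dsimp [φ]; infer_instance
    haveI : IsIso φ.τ₂ := by dsimp [φ]; infer_instance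
    haveI : Mono φ.τ₃ := by dsimp [φ]; infer_instance
    have hex : (ShortComplex.mk α e hw).Exact :=
      (ShortComplex.exact_iff_of_epi_of_isIso_of_mono φ).2 hex₁
    have hse : (ShortComplex.mk α e hw).ShortExact :=
      { exact := hex, mono_f := hmono, epi_g := he }
    exact hP.extension_mem α e hw hse (hi M) (hP.kernel_mem u hC (hi _))
end

section
/- Let (𝒜', 𝒜, 𝒜'', i^*, i_*, i^!, j_!, j^*, j_*) be a recollement of abelian categories and let 𝒞 be a wide subcategory of 𝒜 such that i_*(A') ∈ 𝒞 for every object A' of 𝒜'. Then the essential image j^*(𝒞) is closed under kernels in 𝒜'': for every morphism f'' : M'' → N'' of 𝒜'' with M'', N'' ∈ j^*(𝒞), the kernel of f'' lies in j^*(𝒞). -/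
open CategoryTheory CategoryTheory.Limits

universe v₁ v₂ v₃ u₁ u₂ u₃

section Aux
open CategoryTheory CategoryTheory.Limits

variable {A : Type*} [Category A] [Abelian A]

lemma isIso_kernel_ι_of_eq_zero {X Y : A} (u : X ⟶ Y) (hu : u = 0) :
    IsIso (kernel.ι u) := by
  subst hu; infer_instance

lemma isIso_cokernel_π_of_eq_zero {X Y : A} (u : X ⟶ Y) (hu : u = 0) :
    IsIso (cokernel.π u) := by
  subst hu; infer_instance

end Aux

/-- The essential image `j^*(𝒞)` is closed under kernels in `𝒜''`. -/
theorem stmt1 {A₁ : Type u₁} {A₂ : Type u₂} {A₃ : Type u₃}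
    [Category.{v₁} A₁] [Category.{v₂} A₂] [Category.{v₃} A₃]
    [Abelian A₁] [Abelian A₂] [Abelian A₃]
    (R : Recollement A₁ A₂ A₃)
    (P : Set A₂) (hP : IsWide P) (hi : ∀ X : A₁, R.iLow.obj X ∈ P) :
    ∀ {M N : A₃} (f : M ⟶ N), M ∈ imageSet R.jStar P → N ∈ imageSet R.jStar P →
      (kernel f) ∈ imageSet R.jStar P := by
  rintro M'' N'' f ⟨M, hM, ⟨eM⟩⟩ ⟨N, hN, ⟨eN⟩⟩
  haveI := R.jStar_preservesFiniteLimits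
  haveI := R.jStar_preservesFiniteColimits
  haveI := R.jUp_full
  haveI := R.jUp_faithful
  haveI : IsIso R.adj₄.counit := R.adj₄.counit_isIso_of_R_fully_faithful
  set J := R.jStar with hJ
  set fA : J.obj M ⟶ J.obj N := eM.hom ≫ (f ≫ eN.inv) with hfA
  obtain ⟨N', γ, w₁, w₂, hmonoc, hepi, hex₁, hex₂⟩ := R.seq₂ N
  set u : N ⟶ R.jUp.obj (J.obj N) := R.adj₄.unit.app N with hu
  set uM : M ⟶ R.jUp.obj (J.obj M) := R.adj₄.unit.app M with huM
  set c : R.iLow.obj (R.iShk.obj N) ⟶ N := R.adj₂.counit.app N with hc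
  set g : M ⟶ R.jUp.obj (J.obj N) := uM ≫ R.jUp.map fA with hg
  set h : M ⟶ R.iLow.obj N' := g ≫ γ with hh
  set W := cokernel c with hW
  set π : N ⟶ W := cokernel.π c with hπ
  set d : W ⟶ R.jUp.obj (J.obj N) := cokernel.desc c u w₁ with hd
  haveI hmonod : Mono d :=
    (ShortComplex.exact_iff_mono_cokernel_desc (ShortComplex.mk c u w₁)).mp hex₁
  have hπd : π ≫ d = u := cokernel.π_desc _ _ _
  have hdγ : d ≫ γ = 0 := by
    rw [← cancel_epi π, ← Category.assoc, hπd, w₂, comp_zero]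
  have hexd : (ShortComplex.mk d γ hdγ).Exact := by
    have e := ShortComplex.exact_iff_of_epi_of_isIso_of_mono
      (S₁ := ShortComplex.mk u γ w₂) (S₂ := ShortComplex.mk d γ hdγ)
      { τ₁ := π, τ₂ := 𝟙 _, τ₃ := 𝟙 _,
        comm₁₂ := by simpa using hπd, comm₂₃ := by simp }
    exact e.mp hex₂
  have hιg : (kernel.ι h ≫ g) ≫ γ = 0 := by
    rw [Category.assoc, ← hh]; exact kernel.condition h
  set gW : kernel h ⟶ W := hexd.lift (kernel.ι h ≫ g) hιg with hgW
  have hgWd : gW ≫ d = kernel.ι h ≫ g := hexd.lift_f _ _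
  set C := kernel gW with hC
  have hM₀ : (kernel h : A₂) ∈ P := hP.kernel_mem h hM (hi N')
  have hWP : (W : A₂) ∈ P := hP.cokernel_mem c (hi _) hN
  have hCP : (C : A₂) ∈ P := hP.kernel_mem gW hM₀ hWP
  refine ⟨C, hCP, ⟨?_⟩⟩
  -- zero objects
  have hz₁ : IsZero (J.obj (R.iLow.obj N')) := (R.ker_jStar _).mpr ⟨N', ⟨Iso.refl _⟩⟩
  have hz₂ : IsZero (J.obj (R.iLow.obj (R.iShk.obj N))) :=
    (R.ker_jStar _).mpr ⟨R.iShk.obj N, ⟨Iso.refl _⟩⟩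
  have hJh : J.map h = 0 := hz₁.eq_of_tgt _ _
  have hJc : J.map c = 0 := hz₂.eq_of_src _ _
  -- α : J.obj (kernel h) ≅ J.obj M
  haveI : IsIso (kernel.ι (J.map h)) := isIso_kernel_ι_of_eq_zero _ hJh
  haveI : IsIso (J.map (kernel.ι h)) := by
    rw [← kernelComparison_comp_ι h J]; infer_instance
  haveI : IsIso (cokernel.π (J.map c)) := isIso_cokernel_π_of_eq_zero _ hJc
  haveI : IsIso (J.map π) := by
    rw [hπ, ← π_comp_cokernelComparison c J]; infer_instance
  set α : J.obj (kernel h) ≅ J.obj M := asIso (J.map (kernel.ι h)) with hα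
  set β : J.obj W ≅ J.obj N := (asIso (J.map π)).symm with hβ
  -- key identity
  have hkey : J.map g = fA ≫ J.map u := by
    have nat := R.adj₄.counit.naturality fA
    rw [← cancel_mono (R.adj₄.counit.app (J.obj N))]
    rw [hg, J.map_comp, Category.assoc, Category.assoc,
      ← Functor.comp_map R.jUp J fA, nat]
    simp [hu, huM, hJ]
  -- the commuting square
  have hsq' : J.map gW = J.map (kernel.ι h) ≫ fA ≫ J.map π := by
    rw [← cancel_mono (J.map d)]
    have e1 : J.map gW ≫ J.map d = J.map (kernel.ι h) ≫ J.map g := by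
      rw [← J.map_comp, hgWd, J.map_comp]
    rw [e1, hkey]
    simp only [Category.assoc]
    rw [← J.map_comp, hπd]
  have hsq : J.map gW ≫ β.hom = α.hom ≫ fA := by
    rw [hβ, hα, Iso.symm_hom, asIso_inv, asIso_hom, hsq']
    simp
  -- assemble the isomorphism
  refine (asIso (kernelComparison gW J)) ≪≫ (kernel.mapIso (J.map gW) fA α β hsq) ≪≫
    (kernelIsIsoComp eM.hom (f ≫ eN.inv)) ≪≫ (kernelCompMono f eN.inv)
end

section
/- Let (𝒜', 𝒜, 𝒜'', i^*, i_*, i^!, j_!, j^*, j_*) be a recollement of abelian categories and let 𝒞 be a wide subcategory of 𝒜 such that i_*(A') ∈ 𝒞 for every object A' of 𝒜'. Then the essential image j^*(𝒞) is closed under cokernels in 𝒜'': for every morphism f'' : M'' → N'' of 𝒜'' with M'', N'' ∈ j^*(𝒞), the cokernel of f'' lies in j^*(𝒞). -/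
open CategoryTheory CategoryTheory.Limits

universe v₁ v₂ v₃ u₁ u₂ u₃

/-- The essential image `j^*(𝒞)` is closed under cokernels in `𝒜''`. -/
theorem stmt2 {A₁ : Type u₁} {A₂ : Type u₂} {A₃ : Type u₃}
    [Category.{v₁} A₁] [Category.{v₂} A₂] [Category.{v₃} A₃]
    [Abelian A₁] [Abelian A₂] [Abelian A₃]
    (R : Recollement A₁ A₂ A₃)
    (P : Set A₂) (hP : IsWide P) (hi : ∀ X : A₁, R.iLow.obj X ∈ P) :
    ∀ {M N : A₃} (f : M ⟶ N), M ∈ imageSet R.jStar P → N ∈ imageSet R.jStar P →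
      (cokernel f) ∈ imageSet R.jStar P := by
  haveI := R.jStar_additive
  haveI := R.jLow_additive
  haveI := R.jStar_preservesFiniteLimits
  haveI := R.jStar_preservesFiniteColimits
  haveI := R.jUp_full
  haveI := R.jUp_faithful
  -- Any morphism `j_! X ⟶ i_* Y` vanishes.
  have hzero : ∀ (X : A₃) (Y : A₁) (φ : R.jLow.obj X ⟶ R.iLow.obj Y), φ = 0 := by
    intro X Y φ
    have hz : IsZero (R.jStar.obj (R.iLow.obj Y)) :=
      (R.ker_jStar _).mpr ⟨Y, ⟨Iso.refl _⟩⟩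
    have h1 : R.adj₃.homEquiv X (R.iLow.obj Y) φ = 0 := hz.eq_of_tgt _ _
    have h2 := (R.adj₃.homEquiv X (R.iLow.obj Y)).symm_apply_apply φ
    rw [h1] at h2
    rw [← h2, Adjunction.homEquiv_counit, Functor.map_zero, zero_comp]
  rintro M N f ⟨C, hC, ⟨eC⟩⟩ ⟨D, hD, ⟨eD⟩⟩
  obtain ⟨MC, α, w₁, w₂, hmono, hepi, hex1, hex2⟩ := R.seq₁ C
  obtain ⟨ND, γ, v₁, v₂, hmono', hepi', hex1', hex2'⟩ := R.seq₂ D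
  -- `C₀ = ker (C → i_* i^* C)` is in `P`.
  have hC₀ : kernel (R.adj₁.unit.app C) ∈ P := hP.kernel_mem _ hC (hi _)
  -- `D₁ = ker γ ≅ coker (i_* i^! D → D)` is in `P`.
  haveI hmdesc : Mono (cokernel.desc (R.adj₂.counit.app D) (R.adj₄.unit.app D) v₁) :=
    ((ShortComplex.mk (R.adj₂.counit.app D) (R.adj₄.unit.app D) v₁).exact_iff_mono_cokernel_desc).1 hex1'
  have hknz : cokernel.desc (R.adj₂.counit.app D) (R.adj₄.unit.app D) v₁ ≫ γ = 0 := by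
    rw [← cancel_epi (cokernel.π (R.adj₂.counit.app D))]
    simp [v₂]
  let k : cokernel (R.adj₂.counit.app D) ⟶ kernel γ :=
    kernel.lift γ (cokernel.desc (R.adj₂.counit.app D) (R.adj₄.unit.app D) v₁) hknz
  haveI : Mono (k ≫ kernel.ι γ) := by
    rw [kernel.lift_ι]; exact hmdesc
  haveI : Mono k := mono_of_mono k (kernel.ι γ)
  haveI hlepi : Epi (kernel.lift γ (R.adj₄.unit.app D) v₂) :=
    ((ShortComplex.mk (R.adj₄.unit.app D) γ v₂).exact_iff_epi_kernel_lift).1 hex2'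
  have hfac : cokernel.π (R.adj₂.counit.app D) ≫ k = kernel.lift γ (R.adj₄.unit.app D) v₂ := by
    rw [← cancel_mono (kernel.ι γ)]
    simp [k]
  haveI : Epi (cokernel.π (R.adj₂.counit.app D) ≫ k) := by
    rw [hfac]; exact hlepi
  haveI : Epi k := epi_of_epi (cokernel.π (R.adj₂.counit.app D)) k
  haveI : IsIso k := isIso_of_mono_of_epi k
  have hD₁ : kernel γ ∈ P :=
    hP.mem_of_iso (asIso k) (hP.cokernel_mem _ (hi _) hD)
  -- the transposed morphism
  have hkey : R.jStar.map (R.adj₄.homEquiv C (R.jStar.obj D) (eC.hom ≫ f ≫ eD.inv)) ≫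
      R.adj₄.counit.app (R.jStar.obj D) = eC.hom ≫ f ≫ eD.inv := by
    have h2 := (R.adj₄.homEquiv C (R.jStar.obj D)).symm_apply_apply (eC.hom ≫ f ≫ eD.inv)
    rwa [Adjunction.homEquiv_counit] at h2
  -- the induced morphism `f' : C₀ → D₁`
  haveI heps : Epi (kernel.lift (R.adj₁.unit.app C) (R.adj₃.counit.app C) w₂) :=
    ((ShortComplex.mk (R.adj₃.counit.app C) (R.adj₁.unit.app C) w₂).exact_iff_epi_kernel_lift).1 hex2
  have hzf : kernel.ι (R.adj₁.unit.app C) ≫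
      R.adj₄.homEquiv C (R.jStar.obj D) (eC.hom ≫ f ≫ eD.inv) ≫ γ = 0 := by
    apply zero_of_epi_comp (kernel.lift (R.adj₁.unit.app C) (R.adj₃.counit.app C) w₂)
    rw [← Category.assoc, kernel.lift_ι]
    exact hzero _ _ _
  let f' : kernel (R.adj₁.unit.app C) ⟶ kernel γ :=
    kernel.lift γ (kernel.ι (R.adj₁.unit.app C) ≫
      R.adj₄.homEquiv C (R.jStar.obj D) (eC.hom ≫ f ≫ eD.inv))
      (by rw [Category.assoc]; exact hzf)
  -- `j^*` of the kernel inclusions are isomorphisms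
  have hη'0 : R.jStar.map (R.adj₁.unit.app C) = 0 :=
    ((R.ker_jStar _).mpr ⟨_, ⟨Iso.refl _⟩⟩).eq_of_tgt _ _
  have hγ0 : R.jStar.map γ = 0 :=
    ((R.ker_jStar _).mpr ⟨_, ⟨Iso.refl _⟩⟩).eq_of_tgt _ _
  have hiso : ∀ {X Y : A₂} (g : X ⟶ Y), R.jStar.map g = 0 →
      IsIso (R.jStar.map (kernel.ι g)) := by
    intro X Y g hg
    haveI : IsIso (kernelComparison g R.jStar) := by
      rw [← PreservesKernel.iso_hom]; infer_instance
    haveI : IsIso (kernel.ι (R.jStar.map g)) := by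
      rw [← kernelIsoOfEq_hom_comp_ι hg]
      infer_instance
    rw [← kernelComparison_comp_ι g R.jStar]
    infer_instance
  haveI h1 := hiso (R.adj₁.unit.app C) hη'0
  haveI h2 := hiso γ hγ0
  haveI : IsIso (R.adj₄.counit.app (R.jStar.obj D)) := inferInstance
  let aC : R.jStar.obj (kernel (R.adj₁.unit.app C)) ≅ M :=
    asIso (R.jStar.map (kernel.ι (R.adj₁.unit.app C))) ≪≫ eC
  let aD : R.jStar.obj (kernel γ) ≅ N :=
    asIso (R.jStar.map (kernel.ι γ)) ≪≫ asIso (R.adj₄.counit.app (R.jStar.obj D)) ≪≫ eD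
  have hsq : R.jStar.map f' ≫ aD.hom = aC.hom ≫ f := by
    have e1 : f' ≫ kernel.ι γ = kernel.ι (R.adj₁.unit.app C) ≫
        R.adj₄.homEquiv C (R.jStar.obj D) (eC.hom ≫ f ≫ eD.inv) := kernel.lift_ι _ _ _
    simp only [aC, aD, Iso.trans_hom, asIso_hom, Category.assoc]
    rw [← Functor.map_comp_assoc, e1, Functor.map_comp_assoc, reassoc_of% hkey]
    simp
  refine ⟨cokernel f', hP.cokernel_mem f' hC₀ hD₁, ⟨?_⟩⟩
  exact PreservesCokernel.iso R.jStar f' ≪≫ cokernel.mapIso _ f aC aD hsq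
end

section
/- Let (𝒜', 𝒜, 𝒜'', i^*, i_*, i^!, j_!, j^*, j_*) be a recollement of abelian categories and let 𝒞 be a wide subcategory of 𝒜 such that i_*(A') ∈ 𝒞 for every object A' of 𝒜'. Then the essential image j^*(𝒞) is closed under extensions in 𝒜'': for every short exact sequence 0 → M'' → N'' → P'' → 0 in 𝒜'' with M'', P'' ∈ j^*(𝒞), also N'' ∈ j^*(𝒞). -/
open CategoryTheory CategoryTheory.Limits

universe v₁ v₂ v₃ u₁ u₂ u₃

/-- If `M ∈ P` then `j_* j^* M ∈ P`, using the second canonical exact sequence. -/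
lemma mem_jUp_jStar {A₁ : Type u₁} {A₂ : Type u₂} {A₃ : Type u₃}
    [Category.{v₁} A₁] [Category.{v₂} A₂] [Category.{v₃} A₃]
    [Abelian A₁] [Abelian A₂] [Abelian A₃]
    (R : Recollement A₁ A₂ A₃)
    (P : Set A₂) (hP : IsWide P) (hi : ∀ X : A₁, R.iLow.obj X ∈ P)
    {M : A₂} (hM : M ∈ P) : R.jUp.obj (R.jStar.obj M) ∈ P := by
  obtain ⟨N', γ, w₁, w₂, monoε, epiγ, ex₁, ex₂⟩ := R.seq₂ M
  haveI : Mono (ShortComplex.mk _ _ w₁).f := monoε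
  haveI : Epi (ShortComplex.mk _ _ w₂).g := epiγ
  have e₁ : R.iLow.obj (R.iShk.obj M) ≅ kernel (R.adj₄.unit.app M) :=
    IsLimit.conePointUniqueUpToIso ex₁.fIsKernel (limit.isLimit _)
  have hker : kernel (R.adj₄.unit.app M) ∈ P := hP.mem_of_iso e₁ (hi _)
  have hcoim : cokernel (kernel.ι (R.adj₄.unit.app M)) ∈ P :=
    hP.cokernel_mem _ hker hM
  have himg : kernel (cokernel.π (R.adj₄.unit.app M)) ∈ P :=
    hP.mem_of_iso (Abelian.coimageIsoImage (R.adj₄.unit.app M)) hcoim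
  have e₂ : cokernel (R.adj₄.unit.app M) ≅ R.iLow.obj N' :=
    IsColimit.coconePointUniqueUpToIso (colimit.isColimit _) ex₂.gIsCokernel
  have hcok : cokernel (R.adj₄.unit.app M) ∈ P := hP.mem_of_iso e₂.symm (hi _)
  have hSE : (ShortComplex.mk (kernel.ι (cokernel.π (R.adj₄.unit.app M)))
      (cokernel.π (R.adj₄.unit.app M)) (kernel.condition _)).ShortExact :=
    ⟨ShortComplex.exact_of_f_is_kernel _ (kernelIsKernel (cokernel.π (R.adj₄.unit.app M)))⟩
  exact hP.extension_mem _ _ _ hSE himg hcok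

/-- The essential image `j^*(𝒞)` is closed under extensions in `𝒜''`. -/
theorem stmt3 {A₁ : Type u₁} {A₂ : Type u₂} {A₃ : Type u₃}
    [Category.{v₁} A₁] [Category.{v₂} A₂] [Category.{v₃} A₃]
    [Abelian A₁] [Abelian A₂] [Abelian A₃]
    (R : Recollement A₁ A₂ A₃)
    (P : Set A₂) (hP : IsWide P) (hi : ∀ X : A₁, R.iLow.obj X ∈ P) :
    ∀ {X Y Z : A₃} (f : X ⟶ Y) (g : Y ⟶ Z) (w : f ≫ g = 0),
      (ShortComplex.mk f g w).ShortExact →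
      X ∈ imageSet R.jStar P → Z ∈ imageSet R.jStar P → Y ∈ imageSet R.jStar P := by
  intro X Y Z f g w hse hX hZ
  obtain ⟨M, hM, ⟨eX⟩⟩ := hX
  obtain ⟨N, hN, ⟨eZ⟩⟩ := hZ
  haveI := R.jStar_preservesFiniteLimits
  haveI := R.jStar_preservesFiniteColimits
  haveI : PreservesLimits R.jUp := R.adj₄.rightAdjoint_preservesLimits
  haveI := R.jUp_full
  haveI := R.jUp_faithful
  haveI := hse.mono_f
  haveI := hse.epi_g
  let q : R.jUp.obj Y ⟶ R.jUp.obj Z := R.jUp.map g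
  let u : N ⟶ R.jUp.obj Z := R.adj₄.unit.app N ≫ R.jUp.map eZ.hom
  let E : A₂ := pullback q u
  let p : E ⟶ N := pullback.snd q u
  -- the kernel of `p` is isomorphic to the kernel of `q`
  have hφc : kernel.ι q ≫ q = 0 ≫ u := by rw [kernel.condition, zero_comp]
  let φ : kernel q ⟶ E := pullback.lift (kernel.ι q) 0 hφc
  have hφp : φ ≫ p = 0 := pullback.lift_snd _ _ _
  have hφf : φ ≫ pullback.fst q u = kernel.ι q := pullback.lift_fst _ _ _
  have hkerlim : IsLimit (KernelFork.ofι φ hφp) := by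
    refine KernelFork.IsLimit.ofι φ hφp
      (fun {W'} ψ hψ => kernel.lift q (ψ ≫ pullback.fst q u)
        (by rw [Category.assoc, pullback.condition, ← Category.assoc, hψ, zero_comp]))
      (fun {W'} ψ hψ => ?_) (fun {W'} ψ hψ m hm => ?_)
    · apply pullback.hom_ext
      · rw [Category.assoc, hφf, kernel.lift_ι]
      · rw [Category.assoc, hφp, comp_zero, hψ]
    · rw [← cancel_mono (kernel.ι q), kernel.lift_ι, ← hφf, ← Category.assoc, hm]
  have eKp : kernel p ≅ kernel q :=
    IsLimit.conePointUniqueUpToIso (limit.isLimit _) hkerlim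
  have eXk : X ≅ kernel g :=
    IsLimit.conePointUniqueUpToIso hse.fIsKernel (limit.isLimit _)
  have eKq : kernel q ≅ R.jUp.obj (R.jStar.obj M) :=
    (PreservesKernel.iso R.jUp g).symm ≪≫ R.jUp.mapIso (eXk.symm ≪≫ eX.symm)
  have hKp : kernel p ∈ P :=
    hP.mem_of_iso (eKp ≪≫ eKq).symm (mem_jUp_jStar R P hP hi hM)
  -- `j^*(p)` is epi
  have hqepi : Epi (R.jStar.map q) := by
    have h : R.jStar.map (R.jUp.map g)
        = R.adj₄.counit.app Y ≫ g ≫ inv (R.adj₄.counit.app Z) := by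
      rw [← Category.assoc, IsIso.eq_comp_inv]
      exact R.adj₄.counit.naturality g
    show Epi (R.jStar.map (R.jUp.map g))
    rw [h]
    infer_instance
  haveI : IsIso (R.jStar.map u) := by
    haveI : IsIso (R.jStar.map (R.adj₄.unit.app N)) :=
      isIso_of_comp_hom_eq_id (R.adj₄.counit.app (R.jStar.obj N))
        (R.adj₄.left_triangle_components N)
    show IsIso (R.jStar.map (R.adj₄.unit.app N ≫ R.jUp.map eZ.hom))
    rw [Functor.map_comp]
    infer_instance
  have hpepi : Epi (R.jStar.map p) := by
    haveI := hqepi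
    haveI : Epi (pullback.snd (R.jStar.map q) (R.jStar.map u)) :=
      Abelian.epi_pullback_of_epi_f _ _
    have h2 := PreservesPullback.iso_hom_snd R.jStar q u
    rw [show R.jStar.map p = (PreservesPullback.iso R.jStar q u).hom ≫
        pullback.snd (R.jStar.map q) (R.jStar.map u) from h2.symm]
    infer_instance
  -- the cokernel of `p` lies in the essential image of `i_*`, hence in `P`
  have hzero : IsZero (R.jStar.obj (cokernel p)) := by
    haveI := hpepi
    exact IsZero.of_iso
      (IsZero.of_iso (isZero_zero _) (cokernel.ofEpi (R.jStar.map p)))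
      (PreservesCokernel.iso R.jStar p)
  obtain ⟨W, ⟨eW⟩⟩ := (R.ker_jStar _).1 hzero
  have hcok : cokernel p ∈ P := hP.mem_of_iso eW (hi W)
  have himgp : kernel (cokernel.π p) ∈ P := hP.kernel_mem _ hN hcok
  have hcoimp : cokernel (kernel.ι p) ∈ P :=
    hP.mem_of_iso (Abelian.coimageIsoImage p).symm himgp
  have hSEp : (ShortComplex.mk (kernel.ι p) (cokernel.π (kernel.ι p))
      (cokernel.condition _)).ShortExact :=
    ⟨ShortComplex.exact_of_g_is_cokernel _ (cokernelIsCokernel (kernel.ι p))⟩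
  have hEP : E ∈ P := hP.extension_mem _ _ _ hSEp hKp hcoimp
  -- `j^*(E) ≅ Y`
  haveI : IsIso (pullback.fst (R.jStar.map q) (R.jStar.map u)) :=
    pullback_fst_iso_of_right_iso _ _
  have e2 : R.jStar.obj E ≅ Y :=
    PreservesPullback.iso R.jStar q u ≪≫
      asIso (pullback.fst (R.jStar.map q) (R.jStar.map u)) ≪≫
      asIso (R.adj₄.counit.app Y)
  exact ⟨E, hEP, ⟨e2⟩⟩
end

section
/- Let (𝒜', 𝒜, 𝒜'', i^*, i_*, i^!, j_!, j^*, j_*) be a recollement of abelian categories and let 𝒞 be a wide subcategory of 𝒜 such that i_*(A') ∈ 𝒞 for every object A' of 𝒜'. Then the essential image j^*(𝒞) is a wide subcategory of 𝒜''. -/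
open CategoryTheory CategoryTheory.Limits

universe v₁ v₂ v₃ u₁ u₂ u₃

/-- In a wide subcategory, if `f : B ⟶ C` has `C`, `ker f` and `coker f` in `P`,
then `B ∈ P`. -/
lemma IsWide.mem_of_hom {A : Type u₁} [Category.{v₁} A] [Abelian A] {P : Set A}
    (hP : IsWide P) {B C : A} (f : B ⟶ C)
    (hk : (kernel f) ∈ P) (hc : (cokernel f) ∈ P) (hC : C ∈ P) : B ∈ P := by
  have himg : (kernel (cokernel.π f) : A) ∈ P := hP.kernel_mem _ hC hc
  have hcoim : (cokernel (kernel.ι f) : A) ∈ P :=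
    hP.mem_of_iso (Abelian.coimageIsoImage f).symm himg
  refine hP.extension_mem (kernel.ι f) (cokernel.π (kernel.ι f)) (cokernel.condition _)
    ⟨?_⟩ hk hcoim
  exact ShortComplex.exact_of_g_is_cokernel _ (cokernelIsCokernel _)

/-- If `𝒞 ⊆ 𝒜` is wide and contains `i_*(𝒜')`, then `j^*(𝒞)` is a wide
subcategory of `𝒜''`. -/
theorem stmt4 {A₁ : Type u₁} {A₂ : Type u₂} {A₃ : Type u₃}
    [Category.{v₁} A₁] [Category.{v₂} A₂] [Category.{v₃} A₃]
    [Abelian A₁] [Abelian A₂] [Abelian A₃]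
    (R : Recollement A₁ A₂ A₃)
    (P : Set A₂) (hP : IsWide P) (hi : ∀ X : A₁, R.iLow.obj X ∈ P) :
    IsWide (imageSet R.jStar P) := by
  haveI := R.jStar_preservesFiniteLimits
  haveI := R.jStar_preservesFiniteColimits
  haveI := R.jLow_additive
  haveI := R.jStar_additive
  haveI : PreservesColimitsOfSize.{0,0} R.jLow := R.adj₃.leftAdjoint_preservesColimits
  -- the natural isomorphism `j^* j_! ≅ id` conjugates maps
  have hnat : ∀ {X Y : A₃} (f : X ⟶ Y),
      (R.jLow ⋙ R.jStar).map f = R.iso₃.hom.app X ≫ f ≫ R.iso₃.inv.app Y := by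
    intro X Y f
    have h := R.iso₃.hom.naturality f
    simp only [Functor.id_map] at h
    rw [← Category.assoc, ← h]; simp
  -- kernels are preserved up to iso
  have kiso : ∀ {X Y : A₃} (f : X ⟶ Y),
      Nonempty (kernel ((R.jLow ⋙ R.jStar).map f) ≅ kernel f) := by
    intro X Y f
    exact ⟨kernelIsoOfEq (hnat f) ≪≫ kernelIsIsoComp _ _ ≪≫ kernelCompMono _ _⟩
  have ciso : ∀ {X Y : A₃} (f : X ⟶ Y),
      Nonempty (cokernel ((R.jLow ⋙ R.jStar).map f) ≅ cokernel f) := by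
    intro X Y f
    exact ⟨cokernelIsoOfEq (hnat f) ≪≫ cokernelEpiComp _ _ ≪≫ cokernelCompIsIso _ _⟩
  -- key: `C ∈ P → j_! j^* C ∈ P`
  have key : ∀ C : A₂, C ∈ P → R.jLow.obj (R.jStar.obj C) ∈ P := by
    intro C hC
    obtain ⟨M, α, w₁, w₂, hmono, hepi, hex₁, hex₂⟩ := R.seq₁ C
    haveI := hmono; haveI := hepi
    have hker : (kernel (R.adj₃.counit.app C)) ∈ P := by
      have hlim : IsLimit (KernelFork.ofι α w₁) := hex₁.fIsKernel
      exact hP.mem_of_iso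
        (hlim.conePointUniqueUpToIso (limit.isLimit _)) (hi M)
    have hcoker : (cokernel (R.adj₃.counit.app C)) ∈ P := by
      have hcol : IsColimit (CokernelCofork.ofπ (R.adj₁.unit.app C) w₂) := hex₂.gIsCokernel
      exact hP.mem_of_iso
        (((colimit.isColimit _).coconePointUniqueUpToIso hcol).symm)
        (hi (R.iStar.obj C))
    exact hP.mem_of_hom (R.adj₃.counit.app C) hker hcoker hC
  constructor
  · rintro X Y e ⟨C, hC, ⟨φ⟩⟩
    exact ⟨C, hC, ⟨φ ≪≫ e⟩⟩
  · rintro X Y f ⟨C, hC, ⟨φ⟩⟩ ⟨D, hD, ⟨ψ⟩⟩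
    have hdom : R.jLow.obj X ∈ P := hP.mem_of_iso (R.jLow.mapIso φ) (key C hC)
    have hcod : R.jLow.obj Y ∈ P := hP.mem_of_iso (R.jLow.mapIso ψ) (key D hD)
    obtain ⟨e⟩ := kiso f
    exact ⟨kernel (R.jLow.map f), hP.kernel_mem _ hdom hcod,
      ⟨PreservesKernel.iso R.jStar (R.jLow.map f) ≪≫ e⟩⟩
  · rintro X Y f ⟨C, hC, ⟨φ⟩⟩ ⟨D, hD, ⟨ψ⟩⟩
    have hdom : R.jLow.obj X ∈ P := hP.mem_of_iso (R.jLow.mapIso φ) (key C hC)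
    have hcod : R.jLow.obj Y ∈ P := hP.mem_of_iso (R.jLow.mapIso ψ) (key D hD)
    obtain ⟨e⟩ := ciso f
    exact ⟨cokernel (R.jLow.map f), hP.cokernel_mem _ hdom hcod,
      ⟨PreservesCokernel.iso R.jStar (R.jLow.map f) ≪≫ e⟩⟩
  · rintro X Y Z f g w hse ⟨C, hC, ⟨φ⟩⟩ ⟨E, hE, ⟨ε⟩⟩
    haveI := hse.mono_f
    haveI := hse.epi_g
    have hdom : R.jLow.obj X ∈ P := hP.mem_of_iso (R.jLow.mapIso φ) (key C hC)
    have hcodZ : R.jLow.obj Z ∈ P := hP.mem_of_iso (R.jLow.mapIso ε) (key E hE)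
    set h := R.jLow.map f with hh
    -- kernel of `j_! f` is killed by `j^*`, hence lies in the image of `i_*`, hence in `P`
    have hKzero : IsZero (R.jStar.obj (kernel h)) := by
      obtain ⟨e⟩ := kiso f
      refine IsZero.of_iso (isZero_zero A₃)
        ((PreservesKernel.iso R.jStar h ≪≫ e) ≪≫ kernel.ofMono f)
    obtain ⟨M, ⟨eM⟩⟩ := (R.ker_jStar _).1 hKzero
    have hK : (kernel h) ∈ P := hP.mem_of_iso eM (hi M)
    -- the image of `j_! f` lies in `P`
    have hI : (kernel (cokernel.π h)) ∈ P :=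
      hP.mem_of_iso (Abelian.coimageIsoImage h) (hP.cokernel_mem _ hK hdom)
    -- `j_! g` is a cokernel of `j_! f`
    have hcolim : IsColimit ((CokernelCofork.ofπ g w).map R.jLow) :=
      CokernelCofork.mapIsColimit _ hse.exact.gIsCokernel R.jLow
    have hcolim' : IsColimit (CokernelCofork.ofπ (R.jLow.map g)
        (show h ≫ R.jLow.map g = 0 by rw [hh, ← R.jLow.map_comp, w, Functor.map_zero])) :=
      hcolim.ofIsoColimit (Cocones.ext (Iso.refl _) (by rintro (_|_) <;> simp [hh] <;> exact Category.comp_id _))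
    have θ : cokernel h ≅ R.jLow.obj Z :=
      (colimit.isColimit _).coconePointUniqueUpToIso hcolim'
    -- the short exact sequence `0 → im(j_! f) → j_! Y → j_! Z → 0`
    have hmem : R.jLow.obj Y ∈ P := by
      refine hP.extension_mem (kernel.ι (cokernel.π h)) (cokernel.π h ≫ θ.hom)
        (by rw [← Category.assoc, kernel.condition, zero_comp]) ⟨?_⟩ hI hcodZ
      exact ShortComplex.exact_of_f_is_kernel _
        (isKernelCompMono (kernelIsKernel (cokernel.π h)) θ.hom rfl)
    exact ⟨R.jLow.obj Y, hmem, ⟨R.iso₃.app Y⟩⟩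
end

section
/- Let (𝒜', 𝒜, 𝒜'', i^*, i_*, i^!, j_!, j^*, j_*) be a recollement of abelian categories and let 𝒞 be a wide subcategory of 𝒜 such that i_*(A') ∈ 𝒞 for every object A' of 𝒜'. Then {M ∈ 𝒜 : j^*(M) ∈ j^*(𝒞)} = 𝒞; that is, an object M of 𝒜 lies in 𝒞 if and only if j^*(M) is isomorphic to j^*(C) for some C ∈ 𝒞. -/
open CategoryTheory CategoryTheory.Limits

universe v₁ v₂ v₃ u₁ u₂ u₃

section Aux

variable {C : Type u₁} [Category.{v₁} C] [Abelian C]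

/-- If `0 → X₁ → X₂ → X₃` is exact, then `kernel S.g ≅ S.X₁`. -/
noncomputable def kernelIsoOfExactAux {S : ShortComplex C} (hS : S.Exact) (hm : Mono S.f) :
    kernel S.g ≅ S.X₁ :=
  have := hm
  IsLimit.conePointUniqueUpToIso (kernelIsKernel S.g) hS.fIsKernel

/-- An epi is the cokernel of its kernel. -/
noncomputable def cokernelKernelIsoAux {X Y : C} (q : X ⟶ Y) [Epi q] :
    cokernel (kernel.ι q) ≅ Y :=
  IsColimit.coconePointUniqueUpToIso (cokernelIsCokernel _)
    (Abelian.epiIsCokernelOfKernel _ (kernelIsKernel q))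

/-- The kernel of the lift of `β` along `kernel γ` is the kernel of `β`. -/
noncomputable def kernelLiftIsoAux {K X Y Z : C} (u : K ⟶ X) (β : X ⟶ Y) (γ : Y ⟶ Z)
    (w₁ : u ≫ β = 0) (w₂ : β ≫ γ = 0) (hm : Mono u)
    (hex₁ : (ShortComplex.mk u β w₁).Exact) :
    kernel (kernel.lift γ β w₂) ≅ K :=
  (kernelCompMono (kernel.lift γ β w₂) (kernel.ι γ)).symm ≪≫
    kernelIsoOfEq (kernel.lift_ι γ β w₂) ≪≫ kernelIsoOfExactAux hex₁ hm

lemma epi_lift_aux {X Y Z : C} (β : X ⟶ Y) (γ : Y ⟶ Z) (w₂ : β ≫ γ = 0)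
    (hex₂ : (ShortComplex.mk β γ w₂).Exact) : Epi (kernel.lift γ β w₂) :=
  (ShortComplex.exact_iff_epi_kernel_lift _).1 hex₂

/-- Step A: given exact `0 → K → X → Y → Z → 0` with `K, X, Z ∈ P`, we get `Y ∈ P`. -/
lemma middle_mem_aux (P : Set C) (hP : IsWide P)
    {K X Y Z : C} (u : K ⟶ X) (β : X ⟶ Y) (γ : Y ⟶ Z)
    (w₁ : u ≫ β = 0) (w₂ : β ≫ γ = 0) (hm : Mono u) (he : Epi γ)
    (hex₁ : (ShortComplex.mk u β w₁).Exact)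
    (hex₂ : (ShortComplex.mk β γ w₂).Exact)
    (hK : K ∈ P) (hX : X ∈ P) (hZ : Z ∈ P) : Y ∈ P := by
  set q := kernel.lift γ β w₂ with hq
  haveI : Epi q := epi_lift_aux β γ w₂ hex₂
  have hkq : kernel q ∈ P :=
    hP.mem_of_iso (kernelLiftIsoAux u β γ w₁ w₂ hm hex₁).symm hK
  have hck : cokernel (kernel.ι q) ∈ P := hP.cokernel_mem _ hkq hX
  have hkγ : kernel γ ∈ P := hP.mem_of_iso (cokernelKernelIsoAux q) hck
  haveI := he
  refine hP.extension_mem (kernel.ι γ) γ (kernel.condition γ) ?_ hkγ hZ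
  exact { exact := ShortComplex.exact_kernel γ }

/-- Step C: given exact `0 → K → X → Y → Z` with `K, Y, Z ∈ P`, we get `X ∈ P`. -/
lemma source_mem_aux (P : Set C) (hP : IsWide P)
    {K X Y Z : C} (u : K ⟶ X) (β : X ⟶ Y) (γ : Y ⟶ Z)
    (w₁ : u ≫ β = 0) (w₂ : β ≫ γ = 0) (hm : Mono u)
    (hex₁ : (ShortComplex.mk u β w₁).Exact)
    (hex₂ : (ShortComplex.mk β γ w₂).Exact)
    (hK : K ∈ P) (hY : Y ∈ P) (hZ : Z ∈ P) : X ∈ P := by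
  set q := kernel.lift γ β w₂ with hq
  haveI : Epi q := epi_lift_aux β γ w₂ hex₂
  have hkq : kernel q ∈ P :=
    hP.mem_of_iso (kernelLiftIsoAux u β γ w₁ w₂ hm hex₁).symm hK
  have hkγ : kernel γ ∈ P := hP.kernel_mem γ hY hZ
  refine hP.extension_mem (kernel.ι q) q (kernel.condition q) ?_ hkq hkγ
  exact { exact := ShortComplex.exact_kernel q }

end Aux

/-- For wide `𝒞 ⊆ 𝒜` containing `i_*(𝒜')`, one has
`{M ∈ 𝒜 | j^*(M) ∈ j^*(𝒞)} = 𝒞`. -/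
theorem stmt7 {A₁ : Type u₁} {A₂ : Type u₂} {A₃ : Type u₃}
    [Category.{v₁} A₁] [Category.{v₂} A₂] [Category.{v₃} A₃]
    [Abelian A₁] [Abelian A₂] [Abelian A₃]
    (R : Recollement A₁ A₂ A₃)
    (P : Set A₂) (hP : IsWide P) (hi : ∀ X : A₁, R.iLow.obj X ∈ P) :
    {M : A₂ | R.jStar.obj M ∈ imageSet R.jStar P} = P := by
  ext M
  simp only [Set.mem_setOf_eq]
  constructor
  · rintro ⟨Cobj, hC, ⟨e⟩⟩
    -- `e : R.jStar.obj Cobj ≅ R.jStar.obj M`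
    -- Step A: `jUp (jStar Cobj) ∈ P`
    obtain ⟨N, γ, w₁, w₂, hm, he, hex₁, hex₂⟩ := R.seq₂ Cobj
    have hA : R.jUp.obj (R.jStar.obj Cobj) ∈ P :=
      middle_mem_aux P hP _ _ _ w₁ w₂ hm he hex₁ hex₂
        (hi (R.iShk.obj Cobj)) hC (hi N)
    -- Step B: `jUp (jStar M) ∈ P`
    have hB : R.jUp.obj (R.jStar.obj M) ∈ P := hP.mem_of_iso (R.jUp.mapIso e) hA
    -- Step C: `M ∈ P`
    obtain ⟨N', γ', w₁', w₂', hm', he', hex₁', hex₂'⟩ := R.seq₂ M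
    exact source_mem_aux P hP _ _ _ w₁' w₂' hm' hex₁' hex₂'
      (hi (R.iShk.obj M)) hB (hi N')
  · intro hM
    exact ⟨M, hM, ⟨Iso.refl _⟩⟩
end

section
/- Let (𝒜', 𝒜, 𝒜'', i^*, i_*, i^!, j_!, j^*, j_*) be a recollement of abelian categories and let 𝒞 be a wide subcategory of 𝒜 such that i_*(i^*(C)) ∈ 𝒞 for every C ∈ 𝒞. Then the essential image i^*(𝒞) is a wide subcategory of 𝒜'. -/
open CategoryTheory CategoryTheory.Limits

universe v₁ v₂ v₃ u₁ u₂ u₃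

/-- If `𝒞 ⊆ 𝒜` is wide and `i_* i^*(𝒞) ⊆ 𝒞`, then the essential image `i^*(𝒞)`
is a wide subcategory of `𝒜'`. -/
theorem stmt9 {A₁ : Type u₁} {A₂ : Type u₂} {A₃ : Type u₃}
    [Category.{v₁} A₁] [Category.{v₂} A₂] [Category.{v₃} A₃]
    [Abelian A₁] [Abelian A₂] [Abelian A₃]
    (R : Recollement A₁ A₂ A₃)
    (P : Set A₂) (hP : IsWide P) (h : ∀ C ∈ P, R.iLow.obj (R.iStar.obj C) ∈ P) :
    IsWide (imageSet R.iStar P) := by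
  haveI := R.iLow_additive
  haveI := R.iLow_preservesFiniteLimits
  haveI := R.iLow_preservesFiniteColimits
  have key : ∀ Y : A₁, Y ∈ imageSet R.iStar P ↔ R.iLow.obj Y ∈ P := by
    intro Y
    constructor
    · rintro ⟨X, hX, ⟨e⟩⟩
      exact hP.mem_of_iso (R.iLow.mapIso e) (h X hX)
    · intro hY
      exact ⟨R.iLow.obj Y, hY, ⟨R.iso₁.app Y⟩⟩
  constructor
  · intro X Y e hX
    rcases hX with ⟨C, hC, ⟨e'⟩⟩
    exact ⟨C, hC, ⟨e'.trans e⟩⟩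
  · intro X Y f hX hY
    rw [key] at hX hY ⊢
    exact hP.mem_of_iso (PreservesKernel.iso R.iLow f).symm
      (hP.kernel_mem (R.iLow.map f) hX hY)
  · intro X Y f hX hY
    rw [key] at hX hY ⊢
    exact hP.mem_of_iso (PreservesCokernel.iso R.iLow f).symm
      (hP.cokernel_mem (R.iLow.map f) hX hY)
  · intro X Y Z f g w hse hX hZ
    rw [key] at hX hZ ⊢
    have hse' := hse.map_of_exact R.iLow
    exact hP.extension_mem (R.iLow.map f) (R.iLow.map g)
      ((ShortComplex.mk f g w).map R.iLow).zero hse' hX hZ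
end

section
/- Let (𝒜', 𝒜, 𝒜'', i^*, i_*, i^!, j_!, j^*, j_*) be a recollement of abelian categories and let 𝒞 be a wide subcategory of 𝒜 such that i_*(i^!(C)) ∈ 𝒞 for every C ∈ 𝒞. Then the essential image i^!(𝒞) is a wide subcategory of 𝒜'. -/
open CategoryTheory CategoryTheory.Limits

universe v₁ v₂ v₃ u₁ u₂ u₃

/-- If `𝒞 ⊆ 𝒜` is wide and `i_* i^!(𝒞) ⊆ 𝒞`, then the essential image `i^!(𝒞)`
is a wide subcategory of `𝒜'`. -/
theorem stmt10 {A₁ : Type u₁} {A₂ : Type u₂} {A₃ : Type u₃}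
    [Category.{v₁} A₁] [Category.{v₂} A₂] [Category.{v₃} A₃]
    [Abelian A₁] [Abelian A₂] [Abelian A₃]
    (R : Recollement A₁ A₂ A₃)
    (P : Set A₂) (hP : IsWide P) (h : ∀ C ∈ P, R.iLow.obj (R.iShk.obj C) ∈ P) :
    IsWide (imageSet R.iShk P) := by
  haveI := R.iLow_additive
  haveI := R.iLow_preservesFiniteLimits
  haveI := R.iLow_preservesFiniteColimits
  have key : ∀ Y : A₁, Y ∈ imageSet R.iShk P ↔ R.iLow.obj Y ∈ P := by
    intro Y
    constructor
    · rintro ⟨X, hX, ⟨e⟩⟩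
      exact hP.mem_of_iso (R.iLow.mapIso e) (h X hX)
    · intro hY
      exact ⟨R.iLow.obj Y, hY, ⟨R.iso₂.app Y⟩⟩
  constructor
  · intro X Y e hX
    exact (key Y).2 (hP.mem_of_iso (R.iLow.mapIso e) ((key X).1 hX))
  · intro X Y f hX hY
    refine (key _).2 (hP.mem_of_iso (PreservesKernel.iso R.iLow f).symm ?_)
    exact hP.kernel_mem (R.iLow.map f) ((key X).1 hX) ((key Y).1 hY)
  · intro X Y f hX hY
    refine (key _).2 (hP.mem_of_iso (PreservesCokernel.iso R.iLow f).symm ?_)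
    exact hP.cokernel_mem (R.iLow.map f) ((key X).1 hX) ((key Y).1 hY)
  · intro X Y Z f g w hse hX hZ
    refine (key _).2 ?_
    haveI := hse.mono_f
    haveI := hse.epi_g
    haveI : Mono (R.iLow.map f) := preserves_mono_of_preservesLimit R.iLow f
    haveI : Epi (R.iLow.map g) := preserves_epi_of_preservesColimit R.iLow g
    have hse' := hse.map R.iLow
    exact hP.extension_mem (R.iLow.map f) (R.iLow.map g)
      (by rw [← R.iLow.map_comp, w, R.iLow.map_zero]) hse' ((key X).1 hX) ((key Z).1 hZ)
end

section
/- Let (𝒜', 𝒜, 𝒜'', i^*, i_*, i^!, j_!, j^*, j_*) be a recollement of abelian categories and let 𝒞 be a wide subcategory of 𝒜 such that i_*(i^*(C)) ∈ 𝒞 for every C ∈ 𝒞. Then the essential image i^*(𝒞) is closed under extensions in 𝒜': for every short exact sequence 0 → M' → N' → P' → 0 in 𝒜' with M', P' ∈ i^*(𝒞), also N' ∈ i^*(𝒞). -/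
open CategoryTheory CategoryTheory.Limits

universe v₁ v₂ v₃ u₁ u₂ u₃

/-- If `𝒞 ⊆ 𝒜` is wide and `i_* i^*(𝒞) ⊆ 𝒞`, then `i^*(𝒞)` is closed under
extensions in `𝒜'`. -/
theorem stmt16 {A₁ : Type u₁} {A₂ : Type u₂} {A₃ : Type u₃}
    [Category.{v₁} A₁] [Category.{v₂} A₂] [Category.{v₃} A₃]
    [Abelian A₁] [Abelian A₂] [Abelian A₃]
    (R : Recollement A₁ A₂ A₃)
    (P : Set A₂) (hP : IsWide P) (h : ∀ C ∈ P, R.iLow.obj (R.iStar.obj C) ∈ P) :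
    ∀ {X Y Z : A₁} (f : X ⟶ Y) (g : Y ⟶ Z) (w : f ≫ g = 0),
      (ShortComplex.mk f g w).ShortExact →
      X ∈ imageSet R.iStar P → Z ∈ imageSet R.iStar P → Y ∈ imageSet R.iStar P := by
  intro X Y Z f g w hse hX hZ
  haveI := R.iLow_additive
  haveI : R.iLow.PreservesZeroMorphisms := inferInstance
  haveI := R.iLow_preservesFiniteLimits
  haveI := R.iLow_preservesFiniteColimits
  obtain ⟨C, hC, ⟨eC⟩⟩ := hX
  obtain ⟨D, hD, ⟨eD⟩⟩ := hZ
  have hse' := hse.map_of_exact R.iLow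
  have hXmem : R.iLow.obj X ∈ P := hP.mem_of_iso (R.iLow.mapIso eC) (h C hC)
  have hZmem : R.iLow.obj Z ∈ P := hP.mem_of_iso (R.iLow.mapIso eD) (h D hD)
  have hYmem : R.iLow.obj Y ∈ P :=
    hP.extension_mem (R.iLow.map f) (R.iLow.map g) _ hse' hXmem hZmem
  exact ⟨R.iLow.obj Y, hYmem, ⟨R.iso₁.app Y⟩⟩
end

section
/- Let (𝒜', 𝒜, 𝒜'', i^*, i_*, i^!, j_!, j^*, j_*) be a recollement of abelian categories and let 𝒞 be a wide subcategory of 𝒜 such that i_*(i^*(C)) ∈ 𝒞 for every C ∈ 𝒞. Then the essential image i^*(𝒞) is closed under kernels and cokernels in 𝒜': for every morphism f' : M' → N' of 𝒜' with M', N' ∈ i^*(𝒞), both the kernel and the cokernel of f' lie in i^*(𝒞). -/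
open CategoryTheory CategoryTheory.Limits

universe v₁ v₂ v₃ u₁ u₂ u₃

/-- If `𝒞 ⊆ 𝒜` is wide and `i_* i^*(𝒞) ⊆ 𝒞`, then `i^*(𝒞)` is closed under
kernels and cokernels in `𝒜'`. -/
theorem stmt17 {A₁ : Type u₁} {A₂ : Type u₂} {A₃ : Type u₃}
    [Category.{v₁} A₁] [Category.{v₂} A₂] [Category.{v₃} A₃]
    [Abelian A₁] [Abelian A₂] [Abelian A₃]
    (R : Recollement A₁ A₂ A₃)
    (P : Set A₂) (hP : IsWide P) (h : ∀ C ∈ P, R.iLow.obj (R.iStar.obj C) ∈ P) :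
    ∀ {M N : A₁} (f : M ⟶ N), M ∈ imageSet R.iStar P → N ∈ imageSet R.iStar P →
      (kernel f) ∈ imageSet R.iStar P ∧ (cokernel f) ∈ imageSet R.iStar P := by
  intro M N f hM hN
  haveI : R.iLow.Additive := R.iLow_additive
  haveI : R.iLow.PreservesZeroMorphisms := inferInstance
  haveI := R.iLow_preservesFiniteLimits
  haveI := R.iLow_preservesFiniteColimits
  obtain ⟨C, hC, ⟨eC⟩⟩ := hM
  obtain ⟨D, hD, ⟨eD⟩⟩ := hN
  have hMmem : R.iLow.obj M ∈ P := hP.mem_of_iso (R.iLow.mapIso eC) (h C hC)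
  have hNmem : R.iLow.obj N ∈ P := hP.mem_of_iso (R.iLow.mapIso eD) (h D hD)
  constructor
  · refine ⟨kernel (R.iLow.map f), hP.kernel_mem _ hMmem hNmem, ⟨?_⟩⟩
    calc R.iStar.obj (kernel (R.iLow.map f))
        ≅ R.iStar.obj (R.iLow.obj (kernel f)) :=
          R.iStar.mapIso (PreservesKernel.iso R.iLow f).symm
      _ ≅ kernel f := R.iso₁.app _
  · refine ⟨cokernel (R.iLow.map f), hP.cokernel_mem _ hMmem hNmem, ⟨?_⟩⟩
    calc R.iStar.obj (cokernel (R.iLow.map f))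
        ≅ R.iStar.obj (R.iLow.obj (cokernel f)) :=
          R.iStar.mapIso (PreservesCokernel.iso R.iLow f).symm
      _ ≅ cokernel f := R.iso₁.app _
end
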